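/- arXiv:math/0102014 — 4 statements merged into one kernel-verified Lean document; each statement's English description precedes it below -/
import Mathlib

section
/- For any two finite-dimensional complex nonabelian nilpotent Lie algebras g₁ and g₂ (split or not), the product by generators g₁ ×̲ g₂ is a nonsplit Lie algebra. -/
open Module

noncomputable section

/-- Direct sum (product) of two Lie rings. -/
instance prodLieRing (L L' : Type*) [LieRing L] [LieRing L'] : LieRing (L × L') where
  bracket p q := (⁅p.1, q.1⁆, ⁅p.2, q.2⁆)
  add_lie x y z := Prod.ext (add_lie x.1 y.1 z.1) (add_lie x.2 y.2 z.2)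
  lie_add x y z := Prod.ext (lie_add x.1 y.1 z.1) (lie_add x.2 y.2 z.2)
  lie_self x := Prod.ext (lie_self x.1) (lie_self x.2)
  leibniz_lie x y z := Prod.ext (leibniz_lie x.1 y.1 z.1) (leibniz_lie x.2 y.2 z.2)

instance prodLieAlgebra (R L L' : Type*) [CommRing R] [LieRing L] [LieRing L']
    [LieAlgebra R L] [LieAlgebra R L'] : LieAlgebra R (L × L') where
  lie_smul t x y := Prod.ext (lie_smul t x.1 y.1) (lie_smul t x.2 y.2)

/-- A Lie algebra is nonsplit if it is not the direct sum of two nonzero ideals. -/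
def LieAlgebra.Nonsplit (R L : Type*) [CommRing R] [LieRing L] [LieAlgebra R L] : Prop :=
  ¬ ∃ I J : LieIdeal R L, I ≠ ⊥ ∧ J ≠ ⊥ ∧ I ⊓ J = ⊥ ∧ I ⊔ J = ⊤

/-- `g` is nonabelian: some bracket is nonzero. -/
def LieAlgebra.Nonabelian (L : Type*) [LieRing L] : Prop := ∃ x y : L, ⁅x, y⁆ ≠ 0

/-- `L` is the product by generators `g1 ×̲ g2`: the central extension of `g1 ⊕ g2`
by `ℂ^(n1 n2)` given by the cocycle pairing the generators of `g1` with those of `g2`. -/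
structure IsProductByGenerators
    (L g1 g2 : Type*) [LieRing L] [LieAlgebra ℂ L]
    [LieRing g1] [LieAlgebra ℂ g1] [LieRing g2] [LieAlgebra ℂ g2] where
  m1 : ℕ
  m2 : ℕ
  n1 : ℕ
  n2 : ℕ
  two_le_n1 : 2 ≤ n1
  two_le_n2 : 2 ≤ n2
  n1_le : n1 ≤ m1
  n2_le : n2 ≤ m2
  /-- an adapted basis of `g1` -/
  b1 : Basis (Fin m1) ℂ g1
  /-- an adapted basis of `g2` -/
  b2 : Basis (Fin m2) ℂ g2
  /-- the first `n1` basis vectors generate `g1` -/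
  gen1 : Submodule.span ℂ (⇑b1 '' {i : Fin m1 | (i : ℕ) < n1}) ⊔
      (LieAlgebra.derivedSeries ℂ g1 1).toSubmodule = ⊤
  gen2 : Submodule.span ℂ (⇑b2 '' {i : Fin m2 | (i : ℕ) < n2}) ⊔
      (LieAlgebra.derivedSeries ℂ g2 1).toSubmodule = ⊤
  /-- the remaining basis vectors span the derived subalgebra -/
  adapted1 : (LieAlgebra.derivedSeries ℂ g1 1).toSubmodule ≤
      Submodule.span ℂ (⇑b1 '' {i : Fin m1 | n1 ≤ (i : ℕ)})
  adapted2 : (LieAlgebra.derivedSeries ℂ g2 1).toSubmodule ≤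
      Submodule.span ℂ (⇑b2 '' {i : Fin m2 | n2 ≤ (i : ℕ)})
  /-- the cocycle, as a bilinear map `g1 × g2 → ℂ^(n1 n2)` -/
  Φ : g1 →ₗ[ℂ] g2 →ₗ[ℂ] (Fin n1 → Fin n2 → ℂ)
  hΦ : ∀ i j, Φ (b1 i) (b2 j) =
      if h : (i : ℕ) < n1 ∧ (j : ℕ) < n2 then
        Pi.single (⟨i, h.1⟩ : Fin n1) (Pi.single (⟨j, h.2⟩ : Fin n2) (1 : ℂ)) else 0
  /-- the underlying linear identification of `L` with `g1 ⊕ g2 ⊕ ℂ^(n1 n2)` -/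
  e : (g1 × g2 × (Fin n1 → Fin n2 → ℂ)) ≃ₗ[ℂ] L
  bracket_eq : ∀ a a' : g1 × g2 × (Fin n1 → Fin n2 → ℂ),
      ⁅e a, e a'⁆ = e (⁅a.1, a'.1⁆, ⁅a.2.1, a'.2.1⁆, Φ a.1 a'.2.1 - Φ a'.1 a.2.1)

namespace IsProductByGenerators

variable {L g1 g2 : Type*} [LieRing L] [LieAlgebra ℂ L]
  [LieRing g1] [LieAlgebra ℂ g1] [LieRing g2] [LieAlgebra ℂ g2]
  (P : IsProductByGenerators L g1 g2)

/-- inclusion of `g1` -/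
def ι₁ (x : g1) : L := P.e (x, 0, 0)
/-- inclusion of `g2` -/
def ι₂ (y : g2) : L := P.e (0, y, 0)
/-- inclusion of the adjoined center `g3 = ℂ^(n1 n2)` -/
def ι₃ (v : Fin P.n1 → Fin P.n2 → ℂ) : L := P.e (0, 0, v)
/-- projection onto `g1` -/
def p₁ (z : L) : g1 := (P.e.symm z).1
/-- projection onto `g2` -/
def p₂ (z : L) : g2 := (P.e.symm z).2.1
/-- projection onto `g3` -/
def p₃ (z : L) : Fin P.n1 → Fin P.n2 → ℂ := (P.e.symm z).2.2

/-- the component `Dᵢⱼ = pᵢ ∘ D ∘ ιⱼ` of an endomorphism of the product. -/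
def D11 (D : L →ₗ[ℂ] L) (x : g1) : g1 := P.p₁ (D (P.ι₁ x))
def D21 (D : L →ₗ[ℂ] L) (x : g1) : g2 := P.p₂ (D (P.ι₁ x))
def D31 (D : L →ₗ[ℂ] L) (x : g1) : Fin P.n1 → Fin P.n2 → ℂ := P.p₃ (D (P.ι₁ x))
def D12 (D : L →ₗ[ℂ] L) (y : g2) : g1 := P.p₁ (D (P.ι₂ y))
def D22 (D : L →ₗ[ℂ] L) (y : g2) : g2 := P.p₂ (D (P.ι₂ y))
def D32 (D : L →ₗ[ℂ] L) (y : g2) : Fin P.n1 → Fin P.n2 → ℂ := P.p₃ (D (P.ι₂ y))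
def D13 (D : L →ₗ[ℂ] L) (v : Fin P.n1 → Fin P.n2 → ℂ) : g1 := P.p₁ (D (P.ι₃ v))
def D23 (D : L →ₗ[ℂ] L) (v : Fin P.n1 → Fin P.n2 → ℂ) : g2 := P.p₂ (D (P.ι₃ v))
def D33 (D : L →ₗ[ℂ] L) (v : Fin P.n1 → Fin P.n2 → ℂ) : Fin P.n1 → Fin P.n2 → ℂ :=
  P.p₃ (D (P.ι₃ v))

end IsProductByGenerators

/-- `IsDerivation D`: `D` satisfies the Leibniz rule. -/
def IsDerivation {L : Type*} [LieRing L] [LieAlgebra ℂ L] (D : L →ₗ[ℂ] L) : Prop :=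
  ∀ x y : L, D ⁅x, y⁆ = ⁅D x, y⁆ + ⁅x, D y⁆

/-- the descending sequence `g^{[k]}`, with `g^{[1]} = Der(g)(g)`,
`g^{[k+1]} = Der(g)(g^{[k]})`. -/
def derPow (g : Type*) [LieRing g] [LieAlgebra ℂ g] : ℕ → Submodule ℂ g
  | 0 => ⊤
  | k + 1 => Submodule.span ℂ
      {x | ∃ D : g →ₗ[ℂ] g, IsDerivation D ∧ ∃ y ∈ derPow g k, x = D y}

/-- characteristically nilpotent: `g^{[m]} = 0` for some `m`. -/
def CharacteristicallyNilpotent (g : Type*) [LieRing g] [LieAlgebra ℂ g] : Prop :=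
  ∃ m, 1 ≤ m ∧ derPow g m = ⊥

/-- An S-algebra: for any Lie algebra `g2` and any derivation `D` of `g1 ×̲ g2`,
the component `D₂₁ = p₂ ∘ D ∘ p₁` maps `g1` into `[g2, g2]`. -/
def IsSAlgebra (g1 : Type) [LieRing g1] [LieAlgebra ℂ g1] : Prop :=
  ∀ (g2 L : Type) (_ : LieRing g2) (_ : LieAlgebra ℂ g2) (_ : LieRing L)
    (_ : LieAlgebra ℂ L) (P : IsProductByGenerators L g1 g2) (D : L →ₗ[ℂ] L),
    IsDerivation D → ∀ x : g1, P.D21 D x ∈ LieAlgebra.derivedSeries ℂ g2 1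

/-- nilpotency index: smallest `k` with `C^k g = 0` (`C¹g = [g,g]`). -/
noncomputable def nilindex (g : Type*) [LieRing g] [LieAlgebra ℂ g] : ℕ :=
  sInf {k | LieModule.lowerCentralSeries ℂ g g k = ⊥}

/-- dimension as complex vector space -/
def fdim (g : Type*) [LieRing g] [LieAlgebra ℂ g] : ℕ := finrank ℂ g

/-- dimension of the center -/
def zdim (g : Type*) [LieRing g] [LieAlgebra ℂ g] : ℕ :=
  finrank ℂ (LieAlgebra.center ℂ g).toSubmodule

/-- dimension of the derived subalgebra `C¹g = [g,g]` -/
def ddim (g : Type*) [LieRing g] [LieAlgebra ℂ g] : ℕ :=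
  finrank ℂ (LieAlgebra.derivedSeries ℂ g 1).toSubmodule

/-- minimal number of generators of a nilpotent Lie algebra: `dim g/[g,g]` -/
def gdim (g : Type*) [LieRing g] [LieAlgebra ℂ g] : ℕ :=
  finrank ℂ (g ⧸ (LieAlgebra.derivedSeries ℂ g 1).toSubmodule)

def FinDim (g : Type*) [LieRing g] [LieAlgebra ℂ g] : Prop := FiniteDimensional ℂ g

/-- existence of a Lie algebra isomorphism -/
def LieIso (L L' : Type*) [LieRing L] [LieAlgebra ℂ L] [LieRing L'] [LieAlgebra ℂ L'] : Prop :=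
  Nonempty (L ≃ₗ⁅ℂ⁆ L')

/-!
Let `π = generatorCoords : L → ℂ^n₁ × ℂ^n₂` read off the coordinates of the `g₁`- and
`g₂`-components of an element on the chosen generators. Its kernel is `[L, L]`, and the cocycle
gives `⁅z, w⁆` the central component `π₁ z ⊗ π₂ w - π₁ w ⊗ π₂ z`. If `L = I ⊕ J`, then
`π I ⊕ π J` is the whole space and, since `⁅I, J⁆ = 0`, this tensor vanishes for `z ∈ I`,
`w ∈ J`; linear algebra then forces `π I = 0` or `π J = 0`. An ideal killed by `π` lies in
`[L, L] = [I, I] ⊕ [J, J]`, so it is perfect; its images in the solvable algebras `g₁` and `g₂`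
vanish, so it is central, hence zero.
-/

open LieAlgebra

namespace LieIdeal

variable {R L M : Type*} [CommRing R] [LieRing L] [LieAlgebra R L] [LieRing M] [LieAlgebra R M]
  {I J : LieIdeal R L}

lemma le_derivedSeries_of_le_lie_self (hI : I ≤ ⁅I, I⁆) (k : ℕ) : I ≤ derivedSeries R L k := by
  induction k with
  | zero => exact le_top
  | succ k ih =>
    rw [derivedSeries_def, derivedSeriesOfIdeal_succ, ← derivedSeries_def]
    exact hI.trans (LieSubmodule.mono_lie ih ih)

lemma map_eq_zero_of_le_lie_self [IsSolvable M] (f : L →ₗ⁅R⁆ M) (hI : I ≤ ⁅I, I⁆) {z : L}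
    (hz : z ∈ I) : f z = 0 := by
  obtain ⟨k, hk⟩ := IsSolvable.solvable R M
  have := derivedSeries_map_le (f := f) k (mem_map (le_derivedSeries_of_le_lie_self hI k hz))
  rwa [hk, LieSubmodule.mem_bot] at this

lemma lie_eq_zero_of_isCompl (h : IsCompl I J) {z w : L} (hz : z ∈ I) (hw : w ∈ J) :
    ⁅z, w⁆ = 0 := by
  have := LieSubmodule.lie_le_inf I J (LieSubmodule.lie_mem_lie hz hw)
  rwa [h.inf_eq_bot, LieSubmodule.mem_bot] at this

lemma derivedSeries_one_le_sup_of_isCompl (h : IsCompl I J) :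
    derivedSeries R L 1 ≤ ⁅I, I⁆ ⊔ ⁅J, J⁆ := by
  have hIJ : ⁅I, J⁆ = ⊥ := (LieSubmodule.lie_eq_bot_iff _ _).mpr fun _ hz _ hw =>
    lie_eq_zero_of_isCompl h hz hw
  have hJI : ⁅J, I⁆ = ⊥ := by rw [LieSubmodule.lie_comm, hIJ]
  rw [derivedSeries_def, derivedSeriesOfIdeal_succ, derivedSeriesOfIdeal_zero, ← h.sup_eq_top,
    LieSubmodule.sup_lie, LieSubmodule.lie_sup, LieSubmodule.lie_sup, hIJ, hJI, sup_bot_eq,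
    bot_sup_eq]

lemma mem_lie_self_of_isCompl (h : IsCompl I J) {z w : L} (hz : z ∈ I) (hw : w ∈ J)
    (hzw : z - w ∈ derivedSeries R L 1) : z ∈ ⁅I, I⁆ := by
  obtain ⟨p, hp, q, hq, hpq⟩ :=
    (LieSubmodule.mem_sup _ _ _).mp (derivedSeries_one_le_sup_of_isCompl h hzw)
  have hmem : z - p ∈ I ⊓ J := by
    refine ⟨sub_mem hz (LieSubmodule.lie_le_left I I hp), ?_⟩
    rw [show z - p = w + q by rw [← sub_eq_iff_eq_add'.mpr hpq.symm]; abel]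
    exact add_mem hw (LieSubmodule.lie_le_left J J hq)
  rw [h.inf_eq_bot, LieSubmodule.mem_bot, sub_eq_zero] at hmem
  rwa [hmem]

end LieIdeal

section TensorRelation

variable {K ι κ : Type*} [Field K]

lemma exists_eq_smul_of_mul_eq_mul {a b : (ι → K) × (κ → K)} (ha₁ : a.1 ≠ 0) (ha₂ : a.2 ≠ 0)
    (h : ∀ i j, a.1 i * b.2 j = b.1 i * a.2 j) : ∃ c : K, b = c • a := by
  obtain ⟨i₀, hi₀⟩ := Function.ne_iff.mp ha₁
  obtain ⟨j₀, hj₀⟩ := Function.ne_iff.mp ha₂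
  have hb₁ : ∀ i, b.1 i = b.2 j₀ / a.2 j₀ * a.1 i := fun i => by
    rw [div_mul_eq_mul_div, eq_div_iff hj₀]
    linear_combination -h i j₀
  refine ⟨b.2 j₀ / a.2 j₀, Prod.ext (funext hb₁) (funext fun j => ?_)⟩
  refine mul_left_cancel₀ hi₀ ?_
  simp only [Prod.smul_snd, Pi.smul_apply, smul_eq_mul]
  linear_combination h i₀ j + a.2 j * hb₁ i₀

variable {A B : Submodule K ((ι → K) × (κ → K))}

lemma eq_bot_of_disjoint_of_mul_eq_mul (hAB : Disjoint A B)
    (h : ∀ a ∈ A, ∀ b ∈ B, ∀ i j, a.1 i * b.2 j = b.1 i * a.2 j)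
    {a : (ι → K) × (κ → K)} (ha : a ∈ A) (ha₁ : a.1 ≠ 0) (ha₂ : a.2 ≠ 0) : B = ⊥ := by
  refine eq_bot_iff.mpr fun b hb => ?_
  obtain ⟨c, rfl⟩ := exists_eq_smul_of_mul_eq_mul ha₁ ha₂ (h a ha b hb)
  exact (Submodule.mem_bot K).mpr (Submodule.disjoint_def.mp hAB _ (A.smul_mem c ha) hb)

lemma eq_bot_or_eq_bot_of_isCompl_of_mul_eq_mul [Nonempty ι] [Nonempty κ] (hAB : IsCompl A B)
    (h : ∀ a ∈ A, ∀ b ∈ B, ∀ i j, a.1 i * b.2 j = b.1 i * a.2 j) : A = ⊥ ∨ B = ⊥ := by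
  obtain ⟨i₀⟩ := ‹Nonempty ι›
  obtain ⟨j₀⟩ := ‹Nonempty κ›
  obtain ⟨a, ha, b, hb, hab⟩ := Submodule.mem_sup.mp (hAB.sup_eq_top ▸ Submodule.mem_top :
    (1 : (ι → K) × (κ → K)) ∈ A ⊔ B)
  have hb₁ : b.1 i₀ = 1 - a.1 i₀ := eq_sub_of_add_eq' (congr_fun (congr_arg Prod.fst hab) i₀)
  have hb₂ : b.2 j₀ = 1 - a.2 j₀ := eq_sub_of_add_eq' (congr_fun (congr_arg Prod.snd hab) j₀)
  have hdiag : a.1 i₀ = a.2 j₀ := by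
    linear_combination h a ha b hb i₀ j₀ - a.1 i₀ * hb₂ + a.2 j₀ * hb₁
  by_cases h₀ : a.1 i₀ = 0
  · refine .inl (eq_bot_of_disjoint_of_mul_eq_mul hAB.disjoint.symm
      (fun b hb a ha i j => (h a ha b hb i j).symm) hb ?_ ?_)
    · exact fun hb₁' => by simp [hb₁', h₀] at hb₁
    · exact fun hb₂' => by simp [hb₂', ← hdiag, h₀] at hb₂
  · refine .inr (eq_bot_of_disjoint_of_mul_eq_mul hAB.disjoint h ha ?_ ?_)
    · exact fun ha₁ => h₀ (by simp [ha₁])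
    · exact fun ha₂ => h₀ (by simp [hdiag, ha₂])

end TensorRelation

namespace Module.Basis

variable {R V : Type*} [CommRing R] [AddCommGroup V] [Module R V] {m n : ℕ}
  (b : Basis (Fin m) R V) (hnm : n ≤ m)

def initialCoords : V →ₗ[R] Fin n → R := LinearMap.pi fun i => b.coord (Fin.castLE hnm i)

lemma initialCoords_apply (x : V) (i : Fin n) :
    b.initialCoords hnm x i = b.repr x (Fin.castLE hnm i) := rfl

lemma initialCoords_surjective : Function.Surjective (b.initialCoords hnm) := by
  intro u
  refine ⟨∑ i, u i • b (Fin.castLE hnm i), funext fun k => ?_⟩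
  simp [initialCoords_apply, Finsupp.single_apply, Fin.castLE_inj]

lemma ker_initialCoords :
    LinearMap.ker (b.initialCoords hnm) = Submodule.span R (b '' {i | n ≤ (i : ℕ)}) := by
  ext x
  simp only [LinearMap.mem_ker, b.mem_span_image, funext_iff, initialCoords_apply, Pi.zero_apply]
  refine ⟨fun h i hi => ?_, fun h k => ?_⟩
  · by_contra hlt
    exact Finsupp.mem_support_iff.mp hi (h ⟨i, not_le.mp hlt⟩)
  · by_contra hne
    have := h (Finsupp.mem_support_iff.mpr hne)
    simp at this
    omega

lemma ker_initialCoords_eq {D : Submodule R V}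
    (hgen : Submodule.span R (b '' {i | (i : ℕ) < n}) ⊔ D = ⊤)
    (hD : D ≤ Submodule.span R (b '' {i | n ≤ (i : ℕ)})) :
    LinearMap.ker (b.initialCoords hnm) = D := by
  have hdisj : Disjoint (Submodule.span R (b '' {i | (i : ℕ) < n}))
      (Submodule.span R (b '' {i | n ≤ (i : ℕ)})) :=
    b.linearIndependent.disjoint_span_image (Set.disjoint_left.mpr
      fun i (h₁ : (i : ℕ) < n) (h₂ : n ≤ (i : ℕ)) => by omega)
  rw [ker_initialCoords, ← top_inf_eq (Submodule.span R _), ← hgen, sup_comm,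
    sup_inf_assoc_of_le _ hD, hdisj.eq_bot, sup_bot_eq]

end Module.Basis

namespace IsProductByGenerators

variable {L g1 g2 : Type*} [LieRing L] [LieAlgebra ℂ L]
  [LieRing g1] [LieAlgebra ℂ g1] [LieRing g2] [LieAlgebra ℂ g2]
  (P : IsProductByGenerators L g1 g2)

lemma e_symm_lie (z w : L) : P.e.symm ⁅z, w⁆ = (⁅P.p₁ z, P.p₁ w⁆, ⁅P.p₂ z, P.p₂ w⁆,
    P.Φ (P.p₁ z) (P.p₂ w) - P.Φ (P.p₁ w) (P.p₂ z)) := by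
  simpa [p₁, p₂] using congr_arg P.e.symm (P.bracket_eq (P.e.symm z) (P.e.symm w))

def fstHom : L →ₗ⁅ℂ⁆ g1 where
  toFun := P.p₁
  map_add' z w := by simp [p₁]
  map_smul' c z := by simp [p₁]
  map_lie' {z w} := congr_arg Prod.fst (P.e_symm_lie z w)

def sndHom : L →ₗ⁅ℂ⁆ g2 where
  toFun := P.p₂
  map_add' z w := by simp [p₂]
  map_smul' c z := by simp [p₂]
  map_lie' {z w} := congr_arg (·.2.1) (P.e_symm_lie z w)

def inlHom : g1 →ₗ⁅ℂ⁆ L where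
  toFun := P.ι₁
  map_add' x y := by simp [ι₁, ← map_add]
  map_smul' c x := by simp [ι₁, ← map_smul]
  map_lie' {x y} := by simp [ι₁, P.bracket_eq]

def inrHom : g2 →ₗ⁅ℂ⁆ L where
  toFun := P.ι₂
  map_add' x y := by simp [ι₂, ← map_add]
  map_smul' c x := by simp [ι₂, ← map_smul]
  map_lie' {x y} := by simp [ι₂, P.bracket_eq]

lemma ι₁_lie_ι₂ (x : g1) (y : g2) : ⁅P.ι₁ x, P.ι₂ y⁆ = P.ι₃ (P.Φ x y) := by
  simp [ι₁, ι₂, ι₃, P.bracket_eq]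

lemma ι₃_lie (v : Fin P.n1 → Fin P.n2 → ℂ) (z : L) : ⁅P.ι₃ v, z⁆ = 0 := by
  simpa [ι₃, Prod.mk_zero_zero] using P.bracket_eq (0, 0, v) (P.e.symm z)

lemma eq_ι₁_add_ι₂_add_ι₃ (z : L) : z = P.ι₁ (P.p₁ z) + P.ι₂ (P.p₂ z) + P.ι₃ (P.p₃ z) := by
  simp [ι₁, ι₂, ι₃, p₁, p₂, p₃, ← map_add]

lemma Φ_apply (x : g1) (y : g2) (i : Fin P.n1) (j : Fin P.n2) :
    P.Φ x y i j = P.b1.initialCoords P.n1_le x i * P.b2.initialCoords P.n2_le y j := by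
  let T : g1 →ₗ[ℂ] g2 →ₗ[ℂ] (Fin P.n1 → Fin P.n2 → ℂ) := LinearMap.mk₂ ℂ
    (fun x y i j => P.b1.initialCoords P.n1_le x i * P.b2.initialCoords P.n2_le y j)
    (fun _ _ _ => by ext; simp [add_mul]) (fun _ _ _ => by ext; simp [mul_assoc])
    (fun _ _ _ => by ext; simp [mul_add]) (fun _ _ _ => by ext; simp [mul_left_comm])
  suffices P.Φ = T from congr_fun (congr_fun (LinearMap.congr_fun₂ this x y) i) j
  refine LinearMap.ext_basis P.b1 P.b2 fun k l => ?_
  ext i j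
  simp only [T, P.hΦ, LinearMap.mk₂_apply, Module.Basis.initialCoords_apply,
    Module.Basis.repr_self, Finsupp.single_apply, Fin.ext_iff, Fin.val_castLE]
  split_ifs <;> simp_all [Fin.ext_iff, eq_comm]

lemma ι₃_mem_derivedSeries (v : Fin P.n1 → Fin P.n2 → ℂ) : P.ι₃ v ∈ derivedSeries ℂ L 1 := by
  let ι₃' : (Fin P.n1 → Fin P.n2 → ℂ) →ₗ[ℂ] L :=
    P.e.toLinearMap ∘ₗ LinearMap.inr ℂ g1 _ ∘ₗ LinearMap.inr ℂ g2 _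
  suffices (derivedSeries ℂ L 1).toSubmodule.comap ι₃' = ⊤ from
    (this ▸ Submodule.mem_top : v ∈ (derivedSeries ℂ L 1).toSubmodule.comap ι₃')
  rw [eq_top_iff, ← (Pi.basis fun _ => Pi.basisFun ℂ (Fin P.n2)).span_eq, Submodule.span_le]
  rintro _ ⟨⟨i, j⟩, rfl⟩
  have hΦ : P.Φ (P.b1 (Fin.castLE P.n1_le i)) (P.b2 (Fin.castLE P.n2_le j)) =
      Pi.basis (fun _ => Pi.basisFun ℂ (Fin P.n2)) ⟨i, j⟩ := by
    rw [P.hΦ, dif_pos ⟨i.isLt, j.isLt⟩, Pi.basis_apply, Pi.basisFun_apply]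
    rfl
  rw [SetLike.mem_coe, Submodule.mem_comap, ← hΦ]
  change P.ι₃ (P.Φ _ _) ∈ _
  rw [← ι₁_lie_ι₂]
  exact LieSubmodule.lie_mem_lie (LieSubmodule.mem_top _) (LieSubmodule.mem_top _)

lemma ker_b1_initialCoords :
    LinearMap.ker (P.b1.initialCoords P.n1_le) = (derivedSeries ℂ g1 1).toSubmodule :=
  P.b1.ker_initialCoords_eq P.n1_le P.gen1 P.adapted1

lemma ker_b2_initialCoords :
    LinearMap.ker (P.b2.initialCoords P.n2_le) = (derivedSeries ℂ g2 1).toSubmodule :=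
  P.b2.ker_initialCoords_eq P.n2_le P.gen2 P.adapted2

def generatorCoords : L →ₗ[ℂ] (Fin P.n1 → ℂ) × (Fin P.n2 → ℂ) :=
  (P.b1.initialCoords P.n1_le ∘ₗ (P.fstHom : L →ₗ[ℂ] g1)).prod
    (P.b2.initialCoords P.n2_le ∘ₗ (P.sndHom : L →ₗ[ℂ] g2))

lemma generatorCoords_apply (z : L) : P.generatorCoords z =
    (P.b1.initialCoords P.n1_le (P.p₁ z), P.b2.initialCoords P.n2_le (P.p₂ z)) := rfl

lemma ker_generatorCoords :
    LinearMap.ker P.generatorCoords = (derivedSeries ℂ L 1).toSubmodule := by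
  ext z
  simp only [generatorCoords, LinearMap.ker_prod, LinearMap.ker_comp, ker_b1_initialCoords,
    ker_b2_initialCoords, Submodule.mem_inf, Submodule.mem_comap, LieSubmodule.mem_toSubmodule,
    LieHom.coe_toLinearMap]
  constructor
  · rintro ⟨h₁, h₂⟩
    rw [P.eq_ι₁_add_ι₂_add_ι₃ z]
    refine add_mem (add_mem ?_ ?_) (P.ι₃_mem_derivedSeries _)
    · exact LieIdeal.derivedSeries_map_le (f := P.inlHom) 1 (LieIdeal.mem_map h₁)
    · exact LieIdeal.derivedSeries_map_le (f := P.inrHom) 1 (LieIdeal.mem_map h₂)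
  · intro hz
    exact ⟨LieIdeal.derivedSeries_map_le (f := P.fstHom) 1 (LieIdeal.mem_map hz),
      LieIdeal.derivedSeries_map_le (f := P.sndHom) 1 (LieIdeal.mem_map hz)⟩

lemma generatorCoords_surjective : Function.Surjective P.generatorCoords := by
  rintro ⟨u, v⟩
  obtain ⟨x, rfl⟩ := P.b1.initialCoords_surjective P.n1_le u
  obtain ⟨y, rfl⟩ := P.b2.initialCoords_surjective P.n2_le v
  exact ⟨P.e (x, y, 0), by simp [generatorCoords_apply, p₁, p₂]⟩

lemma generatorCoords_mul_eq_of_lie_eq_zero {z w : L} (h : ⁅z, w⁆ = 0) (i : Fin P.n1)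
    (j : Fin P.n2) : (P.generatorCoords z).1 i * (P.generatorCoords w).2 j =
      (P.generatorCoords w).1 i * (P.generatorCoords z).2 j := by
  have := congr_fun (congr_fun (congr_arg (·.2.2) (P.e_symm_lie z w)) i) j
  simpa [h, Φ_apply, generatorCoords_apply, sub_eq_zero] using this.symm

variable {I J : LieIdeal ℂ L}

lemma eq_bot_of_le_lie_self (P : IsProductByGenerators L g1 g2) [IsSolvable g1] [IsSolvable g2]
    (hI : I ≤ ⁅I, I⁆) : I = ⊥ := by
  have hcentral : ∀ z ∈ I, ∀ w : L, ⁅z, w⁆ = 0 := fun z hz w => by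
    have h₁ : P.p₁ z = 0 := LieIdeal.map_eq_zero_of_le_lie_self P.fstHom hI hz
    have h₂ : P.p₂ z = 0 := LieIdeal.map_eq_zero_of_le_lie_self P.sndHom hI hz
    rw [P.eq_ι₁_add_ι₂_add_ι₃ z, h₁, h₂]
    simpa [ι₁, ι₂, ι₃, ← map_add] using P.ι₃_lie (P.p₃ z) w
  have hII : ⁅I, I⁆ = ⊥ := (LieSubmodule.lie_eq_bot_iff _ _).mpr fun z hz w _ => hcentral z hz w
  exact eq_bot_iff.mpr (hII ▸ hI)

lemma mem_lie_self_of_generatorCoords_eq (h : IsCompl I J) {z w : L} (hz : z ∈ I) (hw : w ∈ J)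
    (hzw : P.generatorCoords z = P.generatorCoords w) : z ∈ ⁅I, I⁆ := by
  refine LieIdeal.mem_lie_self_of_isCompl h hz hw ?_
  rw [← LieSubmodule.mem_toSubmodule, ← P.ker_generatorCoords, LinearMap.mem_ker, map_sub, hzw,
    sub_self]

lemma generatorCoords_eq_zero_of_mem_lie {z : L} (hz : z ∈ ⁅I, I⁆) : P.generatorCoords z = 0 := by
  rw [← LinearMap.mem_ker, P.ker_generatorCoords, LieSubmodule.mem_toSubmodule]
  exact LieSubmodule.mono_lie le_top le_top hz

lemma isCompl_map_generatorCoords (h : IsCompl I J) :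
    IsCompl (I.toSubmodule.map P.generatorCoords) (J.toSubmodule.map P.generatorCoords) := by
  refine ⟨Submodule.disjoint_def.mpr ?_, codisjoint_iff.mpr ?_⟩
  · rintro _ ⟨z, hz, rfl⟩ ⟨w, hw, hzw⟩
    exact P.generatorCoords_eq_zero_of_mem_lie
      (P.mem_lie_self_of_generatorCoords_eq h hz hw hzw.symm)
  · rw [← Submodule.map_sup, ← LieSubmodule.sup_toSubmodule, h.sup_eq_top,
      LieSubmodule.top_toSubmodule, Submodule.map_top, LinearMap.range_eq_top]
    exact P.generatorCoords_surjective

lemma eq_bot_of_map_generatorCoords_eq_bot [IsSolvable g1] [IsSolvable g2] (h : IsCompl I J)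
    (hI : I.toSubmodule.map P.generatorCoords = ⊥) : I = ⊥ :=
  P.eq_bot_of_le_lie_self fun z hz => P.mem_lie_self_of_generatorCoords_eq h hz J.zero_mem <| by
    rw [map_zero, ← Submodule.mem_bot ℂ, ← hI]
    exact Submodule.mem_map_of_mem hz

lemma eq_bot_or_eq_bot_of_isCompl (P : IsProductByGenerators L g1 g2) [IsSolvable g1]
    [IsSolvable g2] (h : IsCompl I J) : I = ⊥ ∨ J = ⊥ := by
  have : Nonempty (Fin P.n1) := ⟨⟨0, by linarith [P.two_le_n1]⟩⟩
  have : Nonempty (Fin P.n2) := ⟨⟨0, by linarith [P.two_le_n2]⟩⟩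
  refine (eq_bot_or_eq_bot_of_isCompl_of_mul_eq_mul (P.isCompl_map_generatorCoords h) ?_).imp
    (P.eq_bot_of_map_generatorCoords_eq_bot h) (P.eq_bot_of_map_generatorCoords_eq_bot h.symm)
  rintro _ ⟨z, hz, rfl⟩ _ ⟨w, hw, rfl⟩
  exact P.generatorCoords_mul_eq_of_lie_eq_zero (LieIdeal.lie_eq_zero_of_isCompl h hz hw)

end IsProductByGenerators

theorem statement_2_general (L g1 g2 : Type) [LieRing L] [LieAlgebra ℂ L]
    [LieRing g1] [LieAlgebra ℂ g1] [LieRing g2] [LieAlgebra ℂ g2]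
    [LieModule.IsNilpotent g1 g1] [LieModule.IsNilpotent g2 g2]
    (P : IsProductByGenerators L g1 g2) :
    LieAlgebra.Nonsplit ℂ L := by
  rintro ⟨I, J, hI, hJ, hinf, hsup⟩
  rcases P.eq_bot_or_eq_bot_of_isCompl (IsCompl.of_eq hinf hsup) with h | h
  exacts [hI h, hJ h]

/-- any product by generators of two nonabelian nilpotent Lie algebras
(split or not) is nonsplit. -/
theorem statement_2 (L g1 g2 : Type) [LieRing L] [LieAlgebra ℂ L]
    [LieRing g1] [LieAlgebra ℂ g1] [LieRing g2] [LieAlgebra ℂ g2]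
    [FiniteDimensional ℂ g1] [FiniteDimensional ℂ g2]
    [LieModule.IsNilpotent g1 g1] [LieModule.IsNilpotent g2 g2]
    (hna1 : LieAlgebra.Nonabelian g1) (hna2 : LieAlgebra.Nonabelian g2)
    (P : IsProductByGenerators L g1 g2) :
    LieAlgebra.Nonsplit ℂ L :=
  statement_2_general L g1 g2 P
end
end

section
/- The product by generators is commutative: for finite-dimensional complex nilpotent Lie algebras g₁ and g₂, there is a Lie algebra isomorphism g₁ ×̲ g₂ ≅ g₂ ×̲ g₁. -/
open Module

noncomputable section

/-!
Swap the two factors, and send the central basis vector `e_(i,j)` of `g₁ ×̲ g₂` to minus the value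
of the cocycle of `g₂ ×̲ g₁` on the `j`-th generator of `g₂` and the `i`-th generator of `g₁`. The
basis vectors that are not generators span the derived algebra, on which both cocycles vanish, so
this map carries the cocycle of `g₁ ×̲ g₂` to the negated transpose of the cocycle of `g₂ ×̲ g₁`.
Hence the swap respects brackets, and applied twice it fixes every `e_(i,j)`.
-/

theorem Module.Basis.span_image_eq_of_sup_eq_top {ι R M : Type*} [Ring R] [AddCommGroup M]
    [Module R M] (b : Basis ι R M) {s t : Set ι} (hst : Disjoint s t) {D : Submodule R M}
    (hDt : D ≤ Submodule.span R (b '' t)) (hsD : Submodule.span R (b '' s) ⊔ D = ⊤) :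
    Submodule.span R (b '' t) = D := by
  have hdisj := b.linearIndependent.disjoint_span_image hst
  refine (eq_of_le_of_inf_le_of_sup_le hDt (z := Submodule.span R (b '' s)) ?_ ?_).symm
  · rw [hdisj.symm.eq_bot]
    exact bot_le
  · rw [sup_comm D, hsD]
    exact le_top

namespace IsProductByGenerators

variable {L L' g1 g2 : Type*} [LieRing L] [LieAlgebra ℂ L] [LieRing L'] [LieAlgebra ℂ L']
  [LieRing g1] [LieAlgebra ℂ g1] [LieRing g2] [LieAlgebra ℂ g2]
  (P : IsProductByGenerators L g1 g2)

theorem span_b1_nongenerators_eq_derived :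
    Submodule.span ℂ (⇑P.b1 '' {i | P.n1 ≤ (i : ℕ)}) =
      (LieAlgebra.derivedSeries ℂ g1 1).toSubmodule :=
  P.b1.span_image_eq_of_sup_eq_top
    (Set.disjoint_left.2 fun i (hlt : (i : ℕ) < P.n1) hle => not_le.2 hlt hle) P.adapted1 P.gen1

theorem span_b2_nongenerators_eq_derived :
    Submodule.span ℂ (⇑P.b2 '' {j | P.n2 ≤ (j : ℕ)}) =
      (LieAlgebra.derivedSeries ℂ g2 1).toSubmodule :=
  P.b2.span_image_eq_of_sup_eq_top
    (Set.disjoint_left.2 fun j (hlt : (j : ℕ) < P.n2) hle => not_le.2 hlt hle) P.adapted2 P.gen2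

theorem b1_mem_derived {i : Fin P.m1} (hi : P.n1 ≤ i) :
    P.b1 i ∈ (LieAlgebra.derivedSeries ℂ g1 1).toSubmodule :=
  P.span_b1_nongenerators_eq_derived ▸ Submodule.subset_span ⟨i, hi, rfl⟩

theorem b2_mem_derived {j : Fin P.m2} (hj : P.n2 ≤ j) :
    P.b2 j ∈ (LieAlgebra.derivedSeries ℂ g2 1).toSubmodule :=
  P.span_b2_nongenerators_eq_derived ▸ Submodule.subset_span ⟨j, hj, rfl⟩

theorem Φ_eq_zero_of_mem_derived {x : g1}
    (hx : x ∈ (LieAlgebra.derivedSeries ℂ g1 1).toSubmodule) : P.Φ x = 0 := by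
  rw [← P.span_b1_nongenerators_eq_derived] at hx
  refine (Submodule.span_le (p := LinearMap.ker P.Φ)).2 ?_ hx
  rintro _ ⟨i, hi, rfl⟩
  exact P.b2.ext fun j => by rw [P.hΦ, dif_neg fun h => not_le.2 h.1 hi, LinearMap.zero_apply]

theorem Φ_flip_eq_zero_of_mem_derived {y : g2}
    (hy : y ∈ (LieAlgebra.derivedSeries ℂ g2 1).toSubmodule) : P.Φ.flip y = 0 := by
  rw [← P.span_b2_nongenerators_eq_derived] at hy
  refine (Submodule.span_le (p := LinearMap.ker P.Φ.flip)).2 ?_ hy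
  rintro _ ⟨j, hj, rfl⟩
  exact P.b1.ext fun i => by
    rw [LinearMap.flip_apply, P.hΦ, dif_neg fun h => not_le.2 h.2 hj, LinearMap.zero_apply]

theorem Φ_b1_castLE_b2_castLE (i : Fin P.n1) (j : Fin P.n2) :
    P.Φ (P.b1 (i.castLE P.n1_le)) (P.b2 (j.castLE P.n2_le)) =
      Pi.single i (Pi.single j (1 : ℂ)) := by
  rw [P.hΦ, dif_pos ⟨i.isLt, j.isLt⟩]
  rfl

abbrev singleBasis (m n : ℕ) : Basis (Σ _ : Fin m, Fin n) ℂ (Fin m → Fin n → ℂ) :=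
  Pi.basis fun _ => Pi.basisFun ℂ (Fin n)

theorem singleBasis_apply (m n : ℕ) (i : Fin m) (j : Fin n) :
    singleBasis m n ⟨i, j⟩ = Pi.single i (Pi.single j 1) := by
  simp

variable (Q : IsProductByGenerators L' g2 g1)

/-- The sign accounts for `Φ` entering the bracket of `g₁ ×̲ g₂` as `Φ x y' - Φ x' y`. -/
def centerSwap : (Fin P.n1 → Fin P.n2 → ℂ) →ₗ[ℂ] (Fin Q.n1 → Fin Q.n2 → ℂ) :=
  (singleBasis P.n1 P.n2).constr ℂ fun k =>
    -Q.Φ (P.b2 (k.2.castLE P.n2_le)) (P.b1 (k.1.castLE P.n1_le))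

theorem centerSwap_Φ (x : g1) (y : g2) : centerSwap P Q (P.Φ x y) = -Q.Φ y x := by
  suffices P.Φ.compr₂ (centerSwap P Q) = -Q.Φ.flip from LinearMap.congr_fun₂ this x y
  refine P.b1.ext fun i => P.b2.ext fun j => ?_
  simp only [LinearMap.compr₂_apply, LinearMap.neg_apply, LinearMap.flip_apply]
  by_cases h : (i : ℕ) < P.n1 ∧ (j : ℕ) < P.n2
  · obtain ⟨i, rfl⟩ : ∃ i' : Fin P.n1, i'.castLE P.n1_le = i := ⟨⟨i, h.1⟩, rfl⟩
    obtain ⟨j, rfl⟩ : ∃ j' : Fin P.n2, j'.castLE P.n2_le = j := ⟨⟨j, h.2⟩, rfl⟩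
    rw [Φ_b1_castLE_b2_castLE, ← singleBasis_apply, centerSwap, Basis.constr_basis]
  · rw [P.hΦ, dif_neg h, map_zero, eq_comm, neg_eq_zero]
    rcases not_and_or.1 h with hi | hj
    · exact LinearMap.congr_fun
        (Q.Φ_flip_eq_zero_of_mem_derived (P.b1_mem_derived (not_lt.1 hi))) _
    · rw [Q.Φ_eq_zero_of_mem_derived (P.b2_mem_derived (not_lt.1 hj)), LinearMap.zero_apply]

theorem centerSwap_comp_centerSwap : centerSwap Q P ∘ₗ centerSwap P Q = LinearMap.id :=
  (singleBasis P.n1 P.n2).ext fun ⟨i, j⟩ => by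
    rw [LinearMap.comp_apply, LinearMap.id_apply, singleBasis_apply,
      ← Φ_b1_castLE_b2_castLE, centerSwap_Φ, map_neg, centerSwap_Φ, neg_neg]

def swapLinearEquiv :
    (g1 × g2 × (Fin P.n1 → Fin P.n2 → ℂ)) ≃ₗ[ℂ] (g2 × g1 × (Fin Q.n1 → Fin Q.n2 → ℂ)) :=
  (LinearEquiv.prodAssoc ℂ g1 g2 _).symm ≪≫ₗ
    (LinearEquiv.prodComm ℂ g1 g2).prodCongr
      (.ofLinearMap (centerSwap P Q) (centerSwap Q P)
        (centerSwap_comp_centerSwap Q P) (centerSwap_comp_centerSwap P Q)) ≪≫ₗ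
    LinearEquiv.prodAssoc ℂ g2 g1 _

theorem swapLinearEquiv_apply (a : g1 × g2 × (Fin P.n1 → Fin P.n2 → ℂ)) :
    swapLinearEquiv P Q a = (a.2.1, a.1, centerSwap P Q a.2.2) :=
  rfl

def swapLieEquiv : L ≃ₗ⁅ℂ⁆ L' :=
  let E := P.e.symm ≪≫ₗ swapLinearEquiv P Q ≪≫ₗ Q.e
  { E with
    map_lie' := fun {z w} => by
      obtain ⟨a, rfl⟩ := P.e.surjective z
      obtain ⟨b, rfl⟩ := P.e.surjective w
      change E _ = ⁅E _, E _⁆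
      simp only [E, LinearEquiv.trans_apply, LinearEquiv.symm_apply_apply, P.bracket_eq,
        swapLinearEquiv_apply, Q.bracket_eq, map_sub, centerSwap_Φ, neg_sub_neg]
    invFun := E.symm
    left_inv := E.left_inv
    right_inv := E.right_inv }

end IsProductByGenerators

theorem statement_3_general (L L' g1 g2 : Type) [LieRing L] [LieAlgebra ℂ L]
    [LieRing L'] [LieAlgebra ℂ L']
    [LieRing g1] [LieAlgebra ℂ g1] [LieRing g2] [LieAlgebra ℂ g2]
    (P : IsProductByGenerators L g1 g2) (Q : IsProductByGenerators L' g2 g1) :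
    LieIso L L' :=
  ⟨P.swapLieEquiv Q⟩

/-- the product by generators is commutative: `g1 ×̲ g2 ≅ g2 ×̲ g1`. -/
theorem statement_3 (L L' g1 g2 : Type) [LieRing L] [LieAlgebra ℂ L]
    [LieRing L'] [LieAlgebra ℂ L']
    [LieRing g1] [LieAlgebra ℂ g1] [LieRing g2] [LieAlgebra ℂ g2]
    [FiniteDimensional ℂ g1] [FiniteDimensional ℂ g2]
    [LieRing.IsNilpotent g1] [LieRing.IsNilpotent g2]
    (P : IsProductByGenerators L g1 g2) (Q : IsProductByGenerators L' g2 g1) :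
    LieIso L L' :=
  statement_3_general L L' g1 g2 P Q
end
end

section
/- Let D be a derivation of g₁ ×̲ g₂ and write D_{ij} = pᵢ ∘ D ∘ pⱼ where pᵢ is the projection onto the i-th component of the vector space decomposition g₁ ×̲ g₂ = g₁ ⊕ g₂ ⊕ g₃ (g₃ being the adjoined center). Then D₁₁ restricted to g₁ is a derivation of g₁ and D₂₂ restricted to g₂ is a derivation of g₂. -/
open Module

noncomputable section

/-! The cocycle only contributes to the central `g3`-component, so the inclusions of `g1`, `g2`
into `g1 ×̲ g2` and the projections onto them are Lie algebra morphisms with `pᵢ ∘ ιᵢ = id`;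
the Leibniz rule for `D` then transports to `Dᵢᵢ = pᵢ ∘ D ∘ ιᵢ`. -/

theorem IsDerivation.comp_retraction {L M : Type*} [LieRing L] [LieAlgebra ℂ L]
    [LieRing M] [LieAlgebra ℂ M] (ι : M →ₗ⁅ℂ⁆ L) (π : L →ₗ⁅ℂ⁆ M)
    (hπι : ∀ x, π (ι x) = x) {D : L →ₗ[ℂ] L} (hD : IsDerivation D) :
    IsDerivation ((π : L →ₗ[ℂ] M) ∘ₗ D ∘ₗ (ι : M →ₗ[ℂ] L)) := by
  intro x y
  simp only [LinearMap.comp_apply, LieHom.coe_toLinearMap, LieHom.map_lie]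
  rw [hD, map_add, LieHom.map_lie, LieHom.map_lie, hπι, hπι]

namespace IsProductByGenerators

variable {L g1 g2 : Type*} [LieRing L] [LieAlgebra ℂ L]
  [LieRing g1] [LieAlgebra ℂ g1] [LieRing g2] [LieAlgebra ℂ g2]
  (P : IsProductByGenerators L g1 g2)

def incl₁ : g1 →ₗ⁅ℂ⁆ L where
  toLinearMap := P.e.toLinearMap ∘ₗ LinearMap.inl ℂ _ _
  map_lie' {x y} := by simp [P.bracket_eq, Prod.mk_zero_zero]

def incl₂ : g2 →ₗ⁅ℂ⁆ L where
  toLinearMap := P.e.toLinearMap ∘ₗ LinearMap.inr ℂ _ _ ∘ₗ LinearMap.inl ℂ _ _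
  map_lie' {x y} := by simp [P.bracket_eq]

def proj₁ : L →ₗ⁅ℂ⁆ g1 where
  toLinearMap := LinearMap.fst ℂ _ _ ∘ₗ P.e.symm.toLinearMap
  map_lie' {z w} := by
    obtain ⟨a, rfl⟩ := P.e.surjective z
    obtain ⟨b, rfl⟩ := P.e.surjective w
    simp [P.bracket_eq]

def proj₂ : L →ₗ⁅ℂ⁆ g2 where
  toLinearMap := LinearMap.fst ℂ _ _ ∘ₗ LinearMap.snd ℂ _ _ ∘ₗ P.e.symm.toLinearMap
  map_lie' {z w} := by
    obtain ⟨a, rfl⟩ := P.e.surjective z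
    obtain ⟨b, rfl⟩ := P.e.surjective w
    simp [P.bracket_eq]

theorem proj₁_incl₁ (x : g1) : P.proj₁ (P.incl₁ x) = x :=
  congrArg Prod.fst (P.e.symm_apply_apply (x, 0, 0))

theorem proj₂_incl₂ (y : g2) : P.proj₂ (P.incl₂ y) = y :=
  congrArg (·.2.1) (P.e.symm_apply_apply (0, y, 0))

end IsProductByGenerators

theorem statement_8_general (L g1 g2 : Type) [LieRing L] [LieAlgebra ℂ L]
    [LieRing g1] [LieAlgebra ℂ g1] [LieRing g2] [LieAlgebra ℂ g2]
    (P : IsProductByGenerators L g1 g2)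
    (D : L →ₗ[ℂ] L) (hD : IsDerivation D) :
    (∀ x y : g1, P.D11 D ⁅x, y⁆ = ⁅P.D11 D x, y⁆ + ⁅x, P.D11 D y⁆) ∧
    (∀ x y : g2, P.D22 D ⁅x, y⁆ = ⁅P.D22 D x, y⁆ + ⁅x, P.D22 D y⁆) :=
  ⟨hD.comp_retraction P.incl₁ P.proj₁ P.proj₁_incl₁,
    hD.comp_retraction P.incl₂ P.proj₂ P.proj₂_incl₂⟩

/-- for a derivation `D` of `g1 ×̲ g2`, `D₁₁` restricted to `g1` is a
derivation of `g1` and `D₂₂` restricted to `g2` is a derivation of `g2`. -/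
theorem statement_8 (L g1 g2 : Type) [LieRing L] [LieAlgebra ℂ L]
    [LieRing g1] [LieAlgebra ℂ g1] [LieRing g2] [LieAlgebra ℂ g2]
    [FiniteDimensional ℂ g1] [FiniteDimensional ℂ g2]
    [LieRing.IsNilpotent g1] [LieRing.IsNilpotent g2]
    (P : IsProductByGenerators L g1 g2)
    (D : L →ₗ[ℂ] L) (hD : IsDerivation D) :
    (∀ x y : g1, P.D11 D ⁅x, y⁆ = ⁅P.D11 D x, y⁆ + ⁅x, P.D11 D y⁆) ∧
    (∀ x y : g2, P.D22 D ⁅x, y⁆ = ⁅P.D22 D x, y⁆ + ⁅x, P.D22 D y⁆) :=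
  statement_8_general L g1 g2 P D hD
end
end

section
/- Let D be a derivation of g₁ ×̲ g₂ with components D_{ij} = pᵢ ∘ D ∘ pⱼ. Then D₂₁([g₁,g₁]) = 0 and D₁₂([g₂,g₂]) = 0. -/
open Module

noncomputable section

/-! The projection `p₂` is a Lie algebra morphism vanishing on `ι₁ g₁`, and `ι₁` is a Lie algebra
morphism, so for a derivation `D` we get
`D₂₁ ⁅x, y⁆ = p₂ ⁅D (ι₁ x), ι₁ y⁆ + p₂ ⁅ι₁ x, D (ι₁ y)⁆ = ⁅p₂ (D (ι₁ x)), 0⁆ + ⁅0, p₂ (D (ι₁ y))⁆ = 0`.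
As `D₂₁` is linear, it vanishes on the span `[g₁, g₁]` of the brackets; symmetrically for `D₁₂`. -/

theorem LieAlgebra.derivedSeries_one_le_ker {R L M : Type*} [CommRing R] [LieRing L]
    [LieAlgebra R L] [AddCommGroup M] [Module R M] (f : L →ₗ[R] M)
    (hf : ∀ x y : L, f ⁅x, y⁆ = 0) :
    (LieAlgebra.derivedSeries R L 1).toSubmodule ≤ LinearMap.ker f := by
  rw [LieAlgebra.derivedSeries_def, LieAlgebra.derivedSeriesOfIdeal_succ,
    LieAlgebra.derivedSeriesOfIdeal_zero, LieSubmodule.lieIdeal_oper_eq_linear_span',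
    Submodule.span_le]
  rintro _ ⟨x, -, y, -, rfl⟩
  exact hf x y

namespace IsProductByGenerators

variable {L g1 g2 : Type*} [LieRing L] [LieAlgebra ℂ L]
  [LieRing g1] [LieAlgebra ℂ g1] [LieRing g2] [LieAlgebra ℂ g2]
  (P : IsProductByGenerators L g1 g2)

theorem p₁_lie (z w : L) : P.p₁ ⁅z, w⁆ = ⁅P.p₁ z, P.p₁ w⁆ := by
  rw [← P.e.apply_symm_apply z, ← P.e.apply_symm_apply w, P.bracket_eq]
  simp [p₁]

theorem p₂_lie (z w : L) : P.p₂ ⁅z, w⁆ = ⁅P.p₂ z, P.p₂ w⁆ := by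
  rw [← P.e.apply_symm_apply z, ← P.e.apply_symm_apply w, P.bracket_eq]
  simp [p₂]

@[simp]
theorem p₁_add (z w : L) : P.p₁ (z + w) = P.p₁ z + P.p₁ w := by
  simp [p₁]

@[simp]
theorem p₂_add (z w : L) : P.p₂ (z + w) = P.p₂ z + P.p₂ w := by
  simp [p₂]

@[simp]
theorem p₁_ι₂ (y : g2) : P.p₁ (P.ι₂ y) = 0 := by
  simp [p₁, ι₂]

@[simp]
theorem p₂_ι₁ (x : g1) : P.p₂ (P.ι₁ x) = 0 := by
  simp [p₂, ι₁]

theorem ι₁_lie (x y : g1) : P.ι₁ ⁅x, y⁆ = ⁅P.ι₁ x, P.ι₁ y⁆ := by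
  simp [ι₁, P.bracket_eq]

theorem ι₂_lie (x y : g2) : P.ι₂ ⁅x, y⁆ = ⁅P.ι₂ x, P.ι₂ y⁆ := by
  simp [ι₂, P.bracket_eq]

def D21ₗ (D : L →ₗ[ℂ] L) : g1 →ₗ[ℂ] g2 :=
  (LinearMap.fst ℂ g2 _ ∘ₗ LinearMap.snd ℂ g1 _ ∘ₗ P.e.symm.toLinearMap) ∘ₗ D ∘ₗ
    P.e.toLinearMap ∘ₗ LinearMap.inl ℂ g1 _

def D12ₗ (D : L →ₗ[ℂ] L) : g2 →ₗ[ℂ] g1 :=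
  (LinearMap.fst ℂ g1 _ ∘ₗ P.e.symm.toLinearMap) ∘ₗ D ∘ₗ
    P.e.toLinearMap ∘ₗ LinearMap.inr ℂ g1 _ ∘ₗ LinearMap.inl ℂ g2 _

theorem D21_lie {D : L →ₗ[ℂ] L} (hD : IsDerivation D) (x y : g1) : P.D21 D ⁅x, y⁆ = 0 := by
  simp [D21, ι₁_lie, hD _ _, p₂_lie]

theorem D12_lie {D : L →ₗ[ℂ] L} (hD : IsDerivation D) (x y : g2) : P.D12 D ⁅x, y⁆ = 0 := by
  simp [D12, ι₂_lie, hD _ _, p₁_lie]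

end IsProductByGenerators

theorem statement_9_general (L g1 g2 : Type) [LieRing L] [LieAlgebra ℂ L]
    [LieRing g1] [LieAlgebra ℂ g1] [LieRing g2] [LieAlgebra ℂ g2]
    (P : IsProductByGenerators L g1 g2)
    (D : L →ₗ[ℂ] L) (hD : IsDerivation D) :
    (∀ c ∈ LieAlgebra.derivedSeries ℂ g1 1, P.D21 D c = 0) ∧
    (∀ c ∈ LieAlgebra.derivedSeries ℂ g2 1, P.D12 D c = 0) :=
  ⟨fun _ hc => LieAlgebra.derivedSeries_one_le_ker (P.D21ₗ D) (P.D21_lie hD) hc,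
    fun _ hc => LieAlgebra.derivedSeries_one_le_ker (P.D12ₗ D) (P.D12_lie hD) hc⟩

/-- for a derivation `D` of `g1 ×̲ g2`, `D₂₁([g1,g1]) = 0` and
`D₁₂([g2,g2]) = 0`. -/
theorem statement_9 (L g1 g2 : Type) [LieRing L] [LieAlgebra ℂ L]
    [LieRing g1] [LieAlgebra ℂ g1] [LieRing g2] [LieAlgebra ℂ g2]
    [FiniteDimensional ℂ g1] [FiniteDimensional ℂ g2]
    [LieRing.IsNilpotent g1] [LieRing.IsNilpotent g2]
    (P : IsProductByGenerators L g1 g2)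
    (D : L →ₗ[ℂ] L) (hD : IsDerivation D) :
    (∀ c ∈ LieAlgebra.derivedSeries ℂ g1 1, P.D21 D c = 0) ∧
    (∀ c ∈ LieAlgebra.derivedSeries ℂ g2 1, P.D12 D c = 0) :=
  statement_9_general L g1 g2 P D hD
end
end
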